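/- For A-bounded operators T, S and α ∈ [0,1), ‖TS‖_{A,α} ≤ min{2/sqrt(1−α), 1/(1−α), 4} · ‖T‖_{A,α} ‖S‖_{A,α}. -/

import Mathlib

/-!
With `B = √A` one has `⟨x, y⟩_A = ⟪B x, B y⟫`, so `‖·‖_A = ‖B ·‖` inherits Cauchy–Schwarz and the
parallelogram law. For `‖x‖_A = 1` the `α`-seminorm dominates both `|⟨T x, x⟩_A|` and
`√(1 - α) ‖T x‖_A`; polarization turns the first bound into `‖T‖_A ≤ 2 ‖T‖_{A,α}`, hence
`‖T‖_A ≤ c ‖T‖_{A,α}` with `c = min 2 (1 / √(1 - α))`. Since `‖·‖_{A,α} ≤ ‖·‖_A` and `‖·‖_A` is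
submultiplicative, `‖T S‖_{A,α} ≤ c² ‖T‖_{A,α} ‖S‖_{A,α}`, and `c² = min 4 (1 / (1 - α))` is the
stated constant.
-/

open scoped ComplexOrder
open ContinuousLinearMap Filter Topology

variable {H : Type*} [NormedAddCommGroup H] [InnerProductSpace ℂ H] [CompleteSpace H]

/-- The A-semi-inner product `⟨x, y⟩_A = ⟨A x, y⟩` (Mathlib convention: conjugate
linear in the first variable). -/
noncomputable def aInner (A : H →L[ℂ] H) (x y : H) : ℂ := inner ℂ (A x) y

/-- The A-seminorm `‖x‖_A = sqrt ⟨x, x⟩_A`. -/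
noncomputable def aNorm (A : H →L[ℂ] H) (x : H) : ℝ := Real.sqrt (aInner A x x).re

/-- `T` is A-bounded. -/
def ABounded (A T : H →L[ℂ] H) : Prop := ∃ c > 0, ∀ x, aNorm A (T x) ≤ c * aNorm A x

/-- The A-operator seminorm. -/
noncomputable def opNormA (A T : H →L[ℂ] H) : ℝ :=
  sSup {r | ∃ x ∈ closure (Set.range A), aNorm A x = 1 ∧ r = aNorm A (T x)}

/-- The A-numerical radius. -/
noncomputable def wA (A T : H →L[ℂ] H) : ℝ :=
  sSup {r | ∃ x, aNorm A x = 1 ∧ r = ‖aInner A (T x) x‖}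

/-- The A-Crawford number. -/
noncomputable def cA (A T : H →L[ℂ] H) : ℝ :=
  sInf {r | ∃ x, aNorm A x = 1 ∧ r = ‖aInner A (T x) x‖}

/-- The `A_α`-seminorm `‖T‖_{A,α}`. -/
noncomputable def alphaNorm (A T : H →L[ℂ] H) (α : ℝ) : ℝ :=
  sSup {r | ∃ x, aNorm A x = 1 ∧
    r = Real.sqrt (α * ‖aInner A (T x) x‖ ^ 2 + (1 - α) * aNorm A (T x) ^ 2)}

/-- `S` is the A-adjoint `T^{♯_A}` of `T`: the solution of `A X = T* A` whose
range lies in the closure of the range of `A`. -/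
def IsAAdjoint (A T S : H →L[ℂ] H) : Prop :=
  A ∘L S = (ContinuousLinearMap.adjoint T) ∘L A ∧ ∀ x, S x ∈ closure (Set.range A)

section ASeminorm

variable {A : H →L[ℂ] H}

theorem aInner_eq_inner_sqrt (hA : A.IsPositive) (x y : H) :
    aInner A x y = inner ℂ (CFC.sqrt A x) (CFC.sqrt A y) := by
  have hA' : 0 ≤ A := (nonneg_iff_isPositive A).mpr hA
  have hB : adjoint (CFC.sqrt A) = CFC.sqrt A :=
    isSelfAdjoint_iff'.mp (IsSelfAdjoint.of_nonneg (CFC.sqrt_nonneg A))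
  calc aInner A x y = inner ℂ ((CFC.sqrt A * CFC.sqrt A) x) y := by
        rw [CFC.sqrt_mul_sqrt_self A hA', aInner]
    _ = inner ℂ (CFC.sqrt A (CFC.sqrt A x)) y := rfl
    _ = inner ℂ (CFC.sqrt A x) (CFC.sqrt A y) := by rw [← adjoint_inner_left, hB]

theorem aNorm_eq_norm_sqrt (hA : A.IsPositive) (x : H) : aNorm A x = ‖CFC.sqrt A x‖ := by
  rw [aNorm, aInner_eq_inner_sqrt hA, ← RCLike.re_eq_complex_re, inner_self_eq_norm_sq,
    Real.sqrt_sq (norm_nonneg _)]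

theorem aInner_self (hA : A.IsPositive) (x : H) : aInner A x x = (aNorm A x : ℂ) ^ 2 := by
  rw [aInner_eq_inner_sqrt hA, aNorm_eq_norm_sqrt hA, inner_self_eq_norm_sq_to_K]
  rfl

theorem norm_aInner_le (hA : A.IsPositive) (x y : H) :
    ‖aInner A x y‖ ≤ aNorm A x * aNorm A y := by
  rw [aInner_eq_inner_sqrt hA, aNorm_eq_norm_sqrt hA, aNorm_eq_norm_sqrt hA]
  exact norm_inner_le_norm _ _

theorem aNorm_smul (hA : A.IsPositive) (c : ℂ) (x : H) : aNorm A (c • x) = ‖c‖ * aNorm A x := by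
  rw [aNorm_eq_norm_sqrt hA, aNorm_eq_norm_sqrt hA, map_smul, norm_smul]

theorem aNorm_add_sq_add_aNorm_sub_sq (hA : A.IsPositive) (x y : H) :
    aNorm A (x + y) ^ 2 + aNorm A (x - y) ^ 2 = 2 * (aNorm A x ^ 2 + aNorm A y ^ 2) := by
  simpa only [aNorm_eq_norm_sqrt hA, map_add, map_sub] using
    parallelogram_law_with_norm ℂ (CFC.sqrt A x) (CFC.sqrt A y)

theorem aNorm_inv_smul_self (hA : A.IsPositive) {x : H} (hx : aNorm A x ≠ 0) :
    aNorm A ((aNorm A x : ℂ)⁻¹ • x) = 1 := by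
  have hx₀ : 0 ≤ aNorm A x := Real.sqrt_nonneg _
  rw [aNorm_smul hA, norm_inv, Complex.norm_real, Real.norm_of_nonneg hx₀,
    inv_mul_cancel₀ hx]

end ASeminorm

section Operators

variable {A T : H →L[ℂ] H}

theorem aNorm_apply_le_of_forall_aNorm_eq_one (hA : A.IsPositive) (hT : ABounded A T) {K : ℝ}
    (h : ∀ x, aNorm A x = 1 → aNorm A (T x) ≤ K) (x : H) :
    aNorm A (T x) ≤ K * aNorm A x := by
  by_cases hx : aNorm A x = 0
  · obtain ⟨c, -, hc⟩ := hT
    have hTx : aNorm A (T x) ≤ 0 := by simpa [hx] using hc x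
    simpa [hx] using hTx
  · have ht : 0 < aNorm A x := lt_of_le_of_ne (Real.sqrt_nonneg _) (Ne.symm hx)
    have hu := h _ (aNorm_inv_smul_self hA hx)
    rw [map_smul, aNorm_smul hA, norm_inv, Complex.norm_real, Real.norm_of_nonneg ht.le,
      inv_mul_le_iff₀ ht] at hu
    linarith

theorem norm_aInner_apply_self_le_of_forall_aNorm_eq_one (hA : A.IsPositive) {w : ℝ}
    (h : ∀ x, aNorm A x = 1 → ‖aInner A (T x) x‖ ≤ w) (x : H) :
    ‖aInner A (T x) x‖ ≤ w * aNorm A x ^ 2 := by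
  by_cases hx : aNorm A x = 0
  · simpa [hx] using norm_aInner_le hA (T x) x
  · have ht : 0 < aNorm A x := lt_of_le_of_ne (Real.sqrt_nonneg _) (Ne.symm hx)
    have hu := h _ (aNorm_inv_smul_self hA hx)
    have hscale : ∀ c : ℂ, ‖aInner A (T (c • x)) (c • x)‖ = ‖c‖ ^ 2 * ‖aInner A (T x) x‖ := by
      intro c
      simp only [aInner, map_smul, inner_smul_left, inner_smul_right, norm_mul, RCLike.norm_conj]
      ring
    rw [hscale, norm_inv, Complex.norm_real, Real.norm_of_nonneg ht.le, inv_pow,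
      inv_mul_le_iff₀ (by positivity)] at hu
    linarith

theorem norm_aInner_apply_le (hA : A.IsPositive) {w : ℝ}
    (h : ∀ x, ‖aInner A (T x) x‖ ≤ w * aNorm A x ^ 2) (x y : H) :
    ‖aInner A (T y) x‖ ≤ w * (aNorm A x ^ 2 + aNorm A y ^ 2) := by
  -- `aInner A (T ·) ·` is the sesquilinear form `⟪(A ∘L T) ·, ·⟫`.
  have hpol : aInner A (T y) x = (aInner A (T (x + y)) (x + y) - aInner A (T (x - y)) (x - y) +
      Complex.I * aInner A (T (x + Complex.I • y)) (x + Complex.I • y) -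
      Complex.I * aInner A (T (x - Complex.I • y)) (x - Complex.I • y)) / 4 :=
    inner_map_polarization (A ∘L T : H →L[ℂ] H).toLinearMap x y
  have hpar₁ := aNorm_add_sq_add_aNorm_sub_sq hA x y
  have hpar₂ := aNorm_add_sq_add_aNorm_sub_sq hA x (Complex.I • y)
  rw [aNorm_smul hA, Complex.norm_I, one_mul] at hpar₂
  set a := aInner A (T (x + y)) (x + y)
  set b := aInner A (T (x - y)) (x - y)
  set c := aInner A (T (x + Complex.I • y)) (x + Complex.I • y)
  set d := aInner A (T (x - Complex.I • y)) (x - Complex.I • y)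
  have htri : ‖a - b + Complex.I * c - Complex.I * d‖ ≤ ‖a‖ + ‖b‖ + ‖c‖ + ‖d‖ := by
    have hI : ∀ z : ℂ, ‖Complex.I * z‖ = ‖z‖ := by simp
    linarith [norm_sub_le (a - b + Complex.I * c) (Complex.I * d),
      norm_add_le (a - b) (Complex.I * c), norm_sub_le a b, hI c, hI d]
  rw [hpol, norm_div, RCLike.norm_ofNat, div_le_iff₀ four_pos]
  calc _ ≤ ‖a‖ + ‖b‖ + ‖c‖ + ‖d‖ := htri
    _ ≤ w * (aNorm A (x + y) ^ 2 + aNorm A (x - y) ^ 2) +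
        w * (aNorm A (x + Complex.I • y) ^ 2 + aNorm A (x - Complex.I • y) ^ 2) := by
        linarith [h (x + y), h (x - y), h (x + Complex.I • y), h (x - Complex.I • y)]
    _ = w * (aNorm A x ^ 2 + aNorm A y ^ 2) * 4 := by rw [hpar₁, hpar₂]; ring

theorem aNorm_apply_le_two_mul (hA : A.IsPositive) (hT : ABounded A T) {w : ℝ}
    (h : ∀ x, ‖aInner A (T x) x‖ ≤ w * aNorm A x ^ 2) (x : H) :
    aNorm A (T x) ≤ 2 * w * aNorm A x := by
  refine aNorm_apply_le_of_forall_aNorm_eq_one hA hT (fun x hx => ?_) x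
  have hr₀ : 0 ≤ aNorm A (T x) := Real.sqrt_nonneg _
  by_cases hr : aNorm A (T x) = 0
  · have hw := (norm_nonneg _).trans (h x)
    rw [hx] at hw
    linarith
  · set y := (aNorm A (T x) : ℂ)⁻¹ • T x
    have hxy : aInner A (T x) y = aNorm A (T x) := by
      simp only [y, aInner, inner_smul_right]
      rw [← aInner, aInner_self hA]
      field_simp [Complex.ofReal_ne_zero.mpr hr]
    calc aNorm A (T x) = ‖aInner A (T x) y‖ := by
          rw [hxy, Complex.norm_real, Real.norm_of_nonneg hr₀]
      _ ≤ w * (aNorm A y ^ 2 + aNorm A x ^ 2) := norm_aInner_apply_le hA h y x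
      _ = 2 * w := by rw [aNorm_inv_smul_self hA hr, hx]; ring

end Operators

section AlphaNorm

variable {A T : H →L[ℂ] H} {α : ℝ}

theorem sqrt_alpha_le_aNorm_apply (hA : A.IsPositive) (hα : 0 ≤ α) {x : H} (hx : aNorm A x = 1) :
    √(α * ‖aInner A (T x) x‖ ^ 2 + (1 - α) * aNorm A (T x) ^ 2) ≤ aNorm A (T x) := by
  have hCS : ‖aInner A (T x) x‖ ≤ aNorm A (T x) := by simpa [hx] using norm_aInner_le hA (T x) x
  have hsq := pow_le_pow_left₀ (norm_nonneg _) hCS 2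
  rw [Real.sqrt_le_iff]
  exact ⟨Real.sqrt_nonneg _, by nlinarith⟩

theorem le_alphaNorm (hA : A.IsPositive) (hT : ABounded A T) (hα : 0 ≤ α) {x : H}
    (hx : aNorm A x = 1) :
    √(α * ‖aInner A (T x) x‖ ^ 2 + (1 - α) * aNorm A (T x) ^ 2) ≤ alphaNorm A T α := by
  obtain ⟨c, -, hc⟩ := hT
  refine le_csSup ⟨c, ?_⟩ ⟨x, hx, rfl⟩
  rintro r ⟨u, hu, rfl⟩
  exact (sqrt_alpha_le_aNorm_apply hA hα hu).trans (by simpa [hu] using hc u)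

theorem alphaNorm_le_of_aNorm_apply_le (hA : A.IsPositive) (hα : 0 ≤ α) {K : ℝ} (hK : 0 ≤ K)
    (h : ∀ x, aNorm A (T x) ≤ K * aNorm A x) : alphaNorm A T α ≤ K := by
  refine Real.sSup_le ?_ hK
  rintro r ⟨x, hx, rfl⟩
  exact (sqrt_alpha_le_aNorm_apply hA hα hx).trans (by simpa [hx] using h x)

theorem norm_aInner_apply_self_le_alphaNorm_mul (hA : A.IsPositive) (hT : ABounded A T)
    (hα : α ∈ Set.Icc (0 : ℝ) 1) (x : H) :
    ‖aInner A (T x) x‖ ≤ alphaNorm A T α * aNorm A x ^ 2 := by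
  refine norm_aInner_apply_self_le_of_forall_aNorm_eq_one hA (fun x hx => ?_) x
  have hCS : ‖aInner A (T x) x‖ ≤ aNorm A (T x) := by simpa [hx] using norm_aInner_le hA (T x) x
  have hsq := pow_le_pow_left₀ (norm_nonneg _) hCS 2
  refine le_trans ?_ (le_alphaNorm hA hT hα.1 hx)
  rw [Real.le_sqrt (norm_nonneg _) (by have := hα.1; have := hα.2; positivity)]
  nlinarith [hα.2]

theorem sqrt_one_sub_mul_aNorm_apply_le_alphaNorm (hA : A.IsPositive) (hT : ABounded A T)
    (hα : 0 ≤ α) {x : H} (hx : aNorm A x = 1) :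
    √(1 - α) * aNorm A (T x) ≤ alphaNorm A T α := by
  refine le_trans ?_ (le_alphaNorm hA hT hα hx)
  have hr₀ : 0 ≤ aNorm A (T x) := Real.sqrt_nonneg _
  calc √(1 - α) * aNorm A (T x) = √((1 - α) * aNorm A (T x) ^ 2) := by
        rw [Real.sqrt_mul' _ (sq_nonneg _), Real.sqrt_sq hr₀]
    _ ≤ _ := Real.sqrt_le_sqrt (by nlinarith [sq_nonneg ‖aInner A (T x) x‖])

theorem alphaNorm_comp_le_mul (hA : A.IsPositive) (hα : 0 ≤ α) {S : H →L[ℂ] H} {K L : ℝ}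
    (hK : 0 ≤ K) (hL : 0 ≤ L) (hT : ∀ x, aNorm A (T x) ≤ K * aNorm A x)
    (hS : ∀ x, aNorm A (S x) ≤ L * aNorm A x) :
    alphaNorm A (T ∘L S) α ≤ K * L := by
  refine alphaNorm_le_of_aNorm_apply_le hA hα (mul_nonneg hK hL) fun x => ?_
  calc aNorm A (T (S x)) ≤ K * aNorm A (S x) := hT (S x)
    _ ≤ K * (L * aNorm A x) := mul_le_mul_of_nonneg_left (hS x) hK
    _ = K * L * aNorm A x := by ring

theorem aNorm_apply_le_min_mul_alphaNorm (hA : A.IsPositive) (hT : ABounded A T)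
    (hα : α ∈ Set.Ico (0 : ℝ) 1) (x : H) :
    aNorm A (T x) ≤ min 2 (√(1 - α))⁻¹ * alphaNorm A T α * aNorm A x := by
  rcases min_choice 2 (√(1 - α))⁻¹ with h | h <;> rw [h]
  · exact aNorm_apply_le_two_mul hA hT
      (norm_aInner_apply_self_le_alphaNorm_mul hA hT ⟨hα.1, hα.2.le⟩) x
  · refine aNorm_apply_le_of_forall_aNorm_eq_one hA hT (fun x hx => ?_) x
    exact (le_inv_mul_iff₀ (Real.sqrt_pos.mpr (sub_pos.mpr hα.2))).mpr
      (sqrt_one_sub_mul_aNorm_apply_le_alphaNorm hA hT hα.1 hx)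

end AlphaNorm

theorem min_two_inv_sqrt_sq_le {α : ℝ} (hα : α < 1) :
    min 2 (√(1 - α))⁻¹ ^ 2 ≤ min (min (2 / √(1 - α)) (1 / (1 - α))) 4 := by
  have hr : 0 < √(1 - α) := Real.sqrt_pos.mpr (sub_pos.mpr hα)
  have hc₀ : 0 ≤ min 2 (√(1 - α))⁻¹ := le_min zero_le_two (inv_nonneg.mpr hr.le)
  have hc₂ := min_le_left 2 (√(1 - α))⁻¹
  have hcr := min_le_right 2 (√(1 - α))⁻¹
  refine le_min (le_min ?_ ?_) ?_
  · rw [sq, div_eq_mul_inv]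
    exact mul_le_mul hc₂ hcr hc₀ zero_le_two
  · calc _ ≤ (√(1 - α))⁻¹ ^ 2 := pow_le_pow_left₀ hc₀ hcr 2
      _ = 1 / (1 - α) := by rw [inv_pow, Real.sq_sqrt (sub_pos.mpr hα).le, one_div]
  · nlinarith

theorem stmt12 (A T S : H →L[ℂ] H) (hA : A.IsPositive)
    (hT : ABounded A T) (hS : ABounded A S) (α : ℝ) (hα : α ∈ Set.Ico (0:ℝ) 1) :
    alphaNorm A (T ∘L S) α ≤
      min (min (2 / Real.sqrt (1 - α)) (1 / (1 - α))) 4 *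
        (alphaNorm A T α * alphaNorm A S α) := by
  have hnonneg : ∀ U : H →L[ℂ] H, 0 ≤ alphaNorm A U α := fun U =>
    Real.sSup_nonneg (by rintro r ⟨x, -, rfl⟩; positivity)
  set c := min 2 (√(1 - α))⁻¹
  have hc : 0 ≤ c := le_min zero_le_two (inv_nonneg.mpr (Real.sqrt_nonneg _))
  calc alphaNorm A (T ∘L S) α ≤ (c * alphaNorm A T α) * (c * alphaNorm A S α) :=
        alphaNorm_comp_le_mul hA hα.1 (mul_nonneg hc (hnonneg T)) (mul_nonneg hc (hnonneg S))
          (aNorm_apply_le_min_mul_alphaNorm hA hT hα) (aNorm_apply_le_min_mul_alphaNorm hA hS hα)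
    _ = c ^ 2 * (alphaNorm A T α * alphaNorm A S α) := by ring
    _ ≤ _ := mul_le_mul_of_nonneg_right (min_two_inv_sqrt_sq_le hα.2)
        (mul_nonneg (hnonneg T) (hnonneg S))
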